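/- Let a > 0, k ≥ 1 a natural number, (λ_p)_{p≥1} a sequence of positive reals, (c₀ₚ), (c₁ₚ) real sequences, and for each p let f_p : [0,a] → ℝ be continuous. Define u_p : [0,a] → ℝ by u_p(x) = cosh(√λ_p x)·c₀ₚ + (sinh(√λ_p x)/√λ_p)·c₁ₚ + ∫₀ˣ (sinh(√λ_p (x−ξ))/√λ_p)·f_p(ξ) dξ. Then for every x ∈ [0,a], Σ_{p=1exp}^∞ λ_pᵏ·e^{2√λ_p (a−x)}·( u_p(x) + u_p'(x)/√λ_p )² ≤ 3·Σ_{p=1}^∞ λ_pᵏ·u_p(a)² + 3·Σ_{p=1}^∞ λ_p^{k−1}·u_p'(a)² + (3/2)·Σ_{p=1}^∞ λ_p^{k−3/2}·(e^{2√λ_p a} − 1)·∫₀ᵃ f_p(ξ)² dξ, where the sums of nonnegative terms are interpreted in [0,∞]. -/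

import Mathlib

/-!
Write `s = √λ`. Expanding `sinh (s * (y - ξ))` into exponentials and differentiating,
`u + u' / s = exp (s * y) * (c₀ + c₁ / s + s⁻¹ * ∫ ξ in 0..y, exp (-(s * ξ)) * f ξ)`, so that
`exp (s * (a - x)) * (u x + u' x / s)` equals `u a + u' a / s` minus
`exp (s * a) / s * ∫ ξ in x..a, exp (-(s * ξ)) * f ξ`.
Squaring with `(p + q - r) ^ 2 ≤ 3 * (p ^ 2 + q ^ 2 + r ^ 2)` and estimating the last integral by
Cauchy–Schwarz gives the bound for each mode; multiplying by `λ ^ k` and summing in `[0, ∞]`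
gives the theorem.
-/

open MeasureTheory Set Real
open scoped ENNReal

theorem sq_add_sub_le {R : Type*} [CommRing R] [LinearOrder R] [IsStrictOrderedRing R]
    (p q r : R) : (p + q - r) ^ 2 ≤ 3 * p ^ 2 + 3 * q ^ 2 + 3 * r ^ 2 := by
  nlinarith [sq_nonneg (p - q), sq_nonneg (p + r), sq_nonneg (q + r)]

theorem sq_integral_mul_le_integral_sq_mul_integral_sq {α : Type*} [MeasurableSpace α]
    {μ : Measure α} {f g : α → ℝ} (hf : Integrable (fun x => f x ^ 2) μ)
    (hg : Integrable (fun x => g x ^ 2) μ) (hfg : Integrable (fun x => f x * g x) μ) :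
    (∫ x, f x * g x ∂μ) ^ 2 ≤ (∫ x, f x ^ 2 ∂μ) * ∫ x, g x ^ 2 ∂μ := by
  have hquad (t : ℝ) : 0 ≤ (∫ x, f x ^ 2 ∂μ) * (t * t) + (-2 * ∫ x, f x * g x ∂μ) * t
      + ∫ x, g x ^ 2 ∂μ := by
    have hexpand : (fun x => (t * f x - g x) ^ 2)
        = fun x => t * t * f x ^ 2 - 2 * t * (f x * g x) + g x ^ 2 := by
      funext x; ring
    have hint : Integrable (fun x => t * t * f x ^ 2 - 2 * t * (f x * g x)) μ :=
      (hf.const_mul _).sub (hfg.const_mul _)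
    have hnonneg : 0 ≤ ∫ x, (t * f x - g x) ^ 2 ∂μ := integral_nonneg fun x => sq_nonneg _
    rw [hexpand, integral_add hint hg, integral_sub (hf.const_mul _) (hfg.const_mul _),
      integral_const_mul, integral_const_mul] at hnonneg
    linarith
  have := discrim_le_zero hquad
  rw [discrim] at this
  nlinarith

theorem sq_intervalIntegral_mul_le {f g : ℝ → ℝ} {x a : ℝ} (hxa : x ≤ a)
    (hf : ContinuousOn f (Icc x a)) (hg : ContinuousOn g (Icc x a)) :
    (∫ ξ in x..a, f ξ * g ξ) ^ 2 ≤ (∫ ξ in x..a, f ξ ^ 2) * ∫ ξ in x..a, g ξ ^ 2 := by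
  have hint {h : ℝ → ℝ} (hh : ContinuousOn h (Icc x a)) : IntegrableOn h (Ioc x a) :=
    hh.integrableOn_Icc.mono_set Ioc_subset_Icc_self
  simp only [intervalIntegral.integral_of_le hxa]
  exact sq_integral_mul_le_integral_sq_mul_integral_sq (hint (hf.pow 2)) (hint (hg.pow 2))
    (hint (hf.mul hg))

theorem integral_exp_neg_mul {c : ℝ} (hc : c ≠ 0) (x y : ℝ) :
    ∫ ξ in x..y, exp (-(c * ξ)) = (exp (-(c * x)) - exp (-(c * y))) / c := by
  rw [intervalIntegral.integral_comp_mul_left (fun t => exp (-t)) hc,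
    intervalIntegral.integral_comp_neg, integral_exp, smul_eq_mul]
  field_simp

theorem hasDerivWithinAt_integral_Icc {g : ℝ → ℝ} {b c y : ℝ} (hg : ContinuousOn g (Icc b c))
    (hy : y ∈ Icc b c) :
    HasDerivWithinAt (fun z => ∫ ξ in b..z, g ξ) (g y) (Icc b c) y := by
  have : Fact (y ∈ Icc b c) := ⟨hy⟩
  exact intervalIntegral.integral_hasDerivWithinAt_right
    (hg.mono (uIcc_subset_Icc (left_mem_Icc.2 (hy.1.trans hy.2)) hy)).intervalIntegrable
    (hg.stronglyMeasurableAtFilter_nhdsWithin measurableSet_Icc y) (hg y hy)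

theorem integral_sinh_mul_sub_div_mul {s y : ℝ} {f : ℝ → ℝ}
    (hf : IntervalIntegrable f volume 0 y) :
    ∫ ξ in 0..y, sinh (s * (y - ξ)) / s * f ξ =
      (exp (s * y) * (∫ ξ in 0..y, exp (-(s * ξ)) * f ξ)
        - exp (-(s * y)) * ∫ ξ in 0..y, exp (s * ξ) * f ξ) / (2 * s) := by
  have hsplit (ξ : ℝ) : sinh (s * (y - ξ)) / s * f ξ
      = exp (s * y) / (2 * s) * (exp (-(s * ξ)) * f ξ)
        - exp (-(s * y)) / (2 * s) * (exp (s * ξ) * f ξ) := by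
    rw [sinh_eq, mul_sub, neg_sub, exp_sub, exp_sub, exp_neg, exp_neg]
    field_simp
  simp_rw [hsplit]
  rw [intervalIntegral.integral_sub
      ((hf.continuousOn_mul (by fun_prop)).const_mul _)
      ((hf.continuousOn_mul (by fun_prop)).const_mul _),
    intervalIntegral.integral_const_mul, intervalIntegral.integral_const_mul]
  ring

theorem rpow_natCast_sub_three_halves {lam : ℝ} (hlam : 0 < lam) (k : ℕ) :
    lam ^ ((k : ℝ) - 3 / 2) = lam ^ k / √lam ^ 3 := by
  rw [rpow_sub hlam, rpow_natCast, sqrt_eq_rpow, ← rpow_mul_natCast hlam.le]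
  norm_num

theorem ENNReal.tsum_ofReal_le_of_le {ι : Type*} {x y z w : ι → ℝ} {b c d : ℝ} (hb : 0 ≤ b)
    (hc : 0 ≤ c) (hd : 0 ≤ d) (hy : ∀ i, 0 ≤ y i) (hz : ∀ i, 0 ≤ z i) (hw : ∀ i, 0 ≤ w i)
    (h : ∀ i, x i ≤ b * y i + c * z i + d * w i) :
    ∑' i, ENNReal.ofReal (x i) ≤ ENNReal.ofReal b * ∑' i, ENNReal.ofReal (y i)
      + ENNReal.ofReal c * ∑' i, ENNReal.ofReal (z i)
      + ENNReal.ofReal d * ∑' i, ENNReal.ofReal (w i) := by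
  rw [← ENNReal.tsum_mul_left, ← ENNReal.tsum_mul_left, ← ENNReal.tsum_mul_left,
    ← ENNReal.tsum_add, ← ENNReal.tsum_add]
  refine ENNReal.tsum_le_tsum fun i => ?_
  have := hy i; have := hz i; have := hw i
  rw [← ENNReal.ofReal_mul hb, ← ENNReal.ofReal_mul hc, ← ENNReal.ofReal_mul hd,
    ← ENNReal.ofReal_add (by positivity) (by positivity),
    ← ENNReal.ofReal_add (by positivity) (by positivity)]
  exact ENNReal.ofReal_le_ofReal (h i)

/-- The solution of `u'' = s ^ 2 * u + f`, `u 0 = c₀`, `u' 0 = c₁` (Duhamel's formula). -/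
noncomputable def mildSolution (s c₀ c₁ : ℝ) (f : ℝ → ℝ) (y : ℝ) : ℝ :=
  cosh (s * y) * c₀ + sinh (s * y) / s * c₁ + ∫ ξ in 0..y, sinh (s * (y - ξ)) / s * f ξ

section mildSolution

variable {a s c₀ c₁ x y : ℝ} {f : ℝ → ℝ}

theorem mildSolution_eq (hf : ContinuousOn f (Icc 0 a)) (hy : y ∈ Icc 0 a) :
    mildSolution s c₀ c₁ f y = cosh (s * y) * c₀ + sinh (s * y) / s * c₁
      + (exp (s * y) * (∫ ξ in 0..y, exp (-(s * ξ)) * f ξ)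
        - exp (-(s * y)) * ∫ ξ in 0..y, exp (s * ξ) * f ξ) / (2 * s) := by
  rw [mildSolution, integral_sinh_mul_sub_div_mul
    (hf.mono (uIcc_subset_Icc (left_mem_Icc.2 (hy.1.trans hy.2)) hy)).intervalIntegrable]

theorem hasDerivWithinAt_mildSolution (hs : s ≠ 0) (hf : ContinuousOn f (Icc 0 a))
    (hy : y ∈ Icc 0 a) :
    HasDerivWithinAt (mildSolution s c₀ c₁ f)
      (s * sinh (s * y) * c₀ + cosh (s * y) * c₁
        + (exp (s * y) * (∫ ξ in 0..y, exp (-(s * ξ)) * f ξ)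
          + exp (-(s * y)) * ∫ ξ in 0..y, exp (s * ξ) * f ξ) / 2) (Icc 0 a) y := by
  have hlin : HasDerivAt (fun z => s * z) s y := by simpa using (hasDerivAt_id y).const_mul s
  have hneg : HasDerivAt (fun z => -(s * z)) (-s) y := hlin.neg
  have hEm := hasDerivWithinAt_integral_Icc (g := fun ξ => exp (-(s * ξ)) * f ξ)
    ((by fun_prop : Continuous fun ξ => exp (-(s * ξ))).continuousOn.mul hf) hy
  have hEp := hasDerivWithinAt_integral_Icc (g := fun ξ => exp (s * ξ) * f ξ)
    ((by fun_prop : Continuous fun ξ => exp (s * ξ)).continuousOn.mul hf) hy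
  have hrhs := ((hlin.cosh.hasDerivWithinAt.mul_const c₀).add
    ((hlin.sinh.hasDerivWithinAt.div_const s).mul_const c₁)).add
    (((hlin.exp.hasDerivWithinAt.mul hEm).sub (hneg.exp.hasDerivWithinAt.mul hEp)).div_const
      (2 * s))
  refine (hrhs.congr (fun z hz => mildSolution_eq hf hz) (mildSolution_eq hf hy)).congr_deriv ?_
  rw [exp_neg]
  field_simp
  ring

theorem mildSolution_add_deriv_div_eq (ha : 0 < a) (hs : s ≠ 0) (hf : ContinuousOn f (Icc 0 a))
    (hy : y ∈ Icc 0 a) {u'y : ℝ}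
    (hu' : HasDerivWithinAt (mildSolution s c₀ c₁ f) u'y (Icc 0 a) y) :
    mildSolution s c₀ c₁ f y + u'y / s
      = exp (s * y) * (c₀ + c₁ / s + (∫ ξ in 0..y, exp (-(s * ξ)) * f ξ) / s) := by
  rw [(uniqueDiffOn_Icc ha y hy).eq_deriv _ hu' (hasDerivWithinAt_mildSolution hs hf hy),
    mildSolution_eq hf hy]
  field_simp
  linear_combination (2 * (s * c₀ + c₁)) * cosh_add_sinh (s * y)

theorem exp_mul_mildSolution_add_deriv_div (ha : 0 < a) (hs : s ≠ 0)
    (hf : ContinuousOn f (Icc 0 a)) {u' : ℝ → ℝ}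
    (hu' : ∀ y ∈ Icc 0 a, HasDerivWithinAt (mildSolution s c₀ c₁ f) (u' y) (Icc 0 a) y)
    (hx : x ∈ Icc 0 a) :
    exp (s * (a - x)) * (mildSolution s c₀ c₁ f x + u' x / s)
      = mildSolution s c₀ c₁ f a + u' a / s
        - exp (s * a) / s * ∫ ξ in x..a, exp (-(s * ξ)) * f ξ := by
  have ha' : a ∈ Icc 0 a := right_mem_Icc.2 ha.le
  have hint : ContinuousOn (fun ξ => exp (-(s * ξ)) * f ξ) (Icc 0 a) :=
    (by fun_prop : Continuous fun ξ => exp (-(s * ξ))).continuousOn.mul hf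
  rw [mildSolution_add_deriv_div_eq ha hs hf hx (hu' x hx),
    mildSolution_add_deriv_div_eq ha hs hf ha' (hu' a ha'),
    ← intervalIntegral.integral_add_adjacent_intervals
      (hint.mono (uIcc_subset_Icc (left_mem_Icc.2 ha.le) hx)).intervalIntegrable
      (hint.mono (uIcc_subset_Icc hx ha')).intervalIntegrable]
  have hexp : exp (s * (a - x)) * exp (s * x) = exp (s * a) := by rw [← exp_add]; ring_nf
  linear_combination (c₀ + c₁ / s + (∫ ξ in 0..x, exp (-(s * ξ)) * f ξ) / s) * hexp

theorem sq_exp_mul_integral_exp_neg_mul_le (hs : 0 < s) (hf : ContinuousOn f (Icc 0 a))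
    (hx : x ∈ Icc 0 a) :
    (exp (s * a) / s * ∫ ξ in x..a, exp (-(s * ξ)) * f ξ) ^ 2
      ≤ (exp (2 * s * a) - 1) / (2 * s ^ 3) * ∫ ξ in 0..a, f ξ ^ 2 := by
  have hexp_sq (t : ℝ) : exp t ^ 2 = exp (2 * t) := by rw [sq, ← exp_add]; ring_nf
  have hCS : (∫ ξ in x..a, exp (-(s * ξ)) * f ξ) ^ 2
      ≤ (exp (-(2 * s * x)) - exp (-(2 * s * a))) / (2 * s) * ∫ ξ in x..a, f ξ ^ 2 := by
    have h := sq_intervalIntegral_mul_le hx.2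
      (by fun_prop : Continuous fun ξ => exp (-(s * ξ))).continuousOn
      (hf.mono (Icc_subset_Icc_left hx.1))
    have hsq (ξ : ℝ) : exp (-(s * ξ)) ^ 2 = exp (-(2 * s * ξ)) := by rw [hexp_sq]; ring_nf
    simp_rw [hsq] at h
    rwa [integral_exp_neg_mul (by positivity)] at h
  have hmono : ∫ ξ in x..a, f ξ ^ 2 ≤ ∫ ξ in 0..a, f ξ ^ 2 :=
    intervalIntegral.integral_mono_interval hx.1 hx.2 le_rfl
      (Filter.Eventually.of_forall fun ξ => sq_nonneg _)
      ((hf.pow 2).mono (uIcc_subset_Icc (left_mem_Icc.2 (hx.1.trans hx.2))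
        (right_mem_Icc.2 (hx.1.trans hx.2)))).intervalIntegrable
  have hnonneg : 0 ≤ ∫ ξ in x..a, f ξ ^ 2 :=
    intervalIntegral.integral_nonneg hx.2 fun ξ _ => sq_nonneg _
  calc (exp (s * a) / s * ∫ ξ in x..a, exp (-(s * ξ)) * f ξ) ^ 2
      = exp (2 * s * a) / s ^ 2 * (∫ ξ in x..a, exp (-(s * ξ)) * f ξ) ^ 2 := by
        rw [mul_assoc, ← hexp_sq]; ring
    _ ≤ exp (2 * s * a) / s ^ 2 * ((exp (-(2 * s * x)) - exp (-(2 * s * a))) / (2 * s)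
          * ∫ ξ in x..a, f ξ ^ 2) := by gcongr
    _ = (exp (2 * s * a) * exp (-(2 * s * x)) - 1) / (2 * s ^ 3) * ∫ ξ in x..a, f ξ ^ 2 := by
        rw [exp_neg (2 * s * a)]
        field_simp
    _ ≤ (exp (2 * s * a) - 1) / (2 * s ^ 3) * ∫ ξ in 0..a, f ξ ^ 2 := by
        have ha : 0 ≤ a := hx.1.trans hx.2
        gcongr
        · exact div_nonneg (sub_nonneg.2 (one_le_exp (by positivity))) (by positivity)
        · exact mul_le_of_le_one_right (exp_pos _).le
            (exp_le_one_iff.2 (neg_nonpos.2 (by have := hx.1; positivity)))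

theorem exp_mul_sq_mildSolution_add_deriv_div_le (ha : 0 < a) (hs : 0 < s)
    (hf : ContinuousOn f (Icc 0 a)) {u' : ℝ → ℝ}
    (hu' : ∀ y ∈ Icc 0 a, HasDerivWithinAt (mildSolution s c₀ c₁ f) (u' y) (Icc 0 a) y)
    (hx : x ∈ Icc 0 a) :
    exp (2 * s * (a - x)) * (mildSolution s c₀ c₁ f x + u' x / s) ^ 2
      ≤ 3 * mildSolution s c₀ c₁ f a ^ 2 + 3 * (u' a / s) ^ 2
        + 3 * ((exp (2 * s * a) - 1) / (2 * s ^ 3) * ∫ ξ in 0..a, f ξ ^ 2) := by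
  have hexp : exp (2 * s * (a - x)) = exp (s * (a - x)) ^ 2 := by rw [sq, ← exp_add]; ring_nf
  rw [hexp, ← mul_pow, exp_mul_mildSolution_add_deriv_div ha hs.ne' hf hu' hx]
  grw [sq_add_sub_le, sq_exp_mul_integral_exp_neg_mul_le hs hf hx]

theorem pow_mul_exp_mul_sq_mildSolution_add_deriv_div_le {lam : ℝ} (hlam : 0 < lam) {k : ℕ}
    (hk : 1 ≤ k) (ha : 0 < a) (hf : ContinuousOn f (Icc 0 a)) {u' : ℝ → ℝ}
    (hu' : ∀ y ∈ Icc 0 a, HasDerivWithinAt (mildSolution √lam c₀ c₁ f) (u' y) (Icc 0 a) y)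
    (hx : x ∈ Icc 0 a) :
    lam ^ k * exp (2 * √lam * (a - x)) * (mildSolution √lam c₀ c₁ f x + u' x / √lam) ^ 2
      ≤ 3 * (lam ^ k * mildSolution √lam c₀ c₁ f a ^ 2) + 3 * (lam ^ (k - 1) * u' a ^ 2)
        + 3 / 2 * (lam ^ ((k : ℝ) - 3 / 2) * (exp (2 * √lam * a) - 1) * ∫ ξ in 0..a, f ξ ^ 2) := by
  have hs : 0 < √lam := sqrt_pos.2 hlam
  have hmode := mul_le_mul_of_nonneg_left
    (exp_mul_sq_mildSolution_add_deriv_div_le (c₀ := c₀) (c₁ := c₁) ha hs hf hu' hx)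
    (pow_nonneg hlam.le k)
  rw [← mul_assoc] at hmode
  have hinv : lam⁻¹ = (√lam ^ 2)⁻¹ := by rw [sq_sqrt hlam.le]
  rw [pow_sub₀ _ hlam.ne' hk, pow_one, hinv, rpow_natCast_sub_three_halves hlam]
  refine hmode.trans_eq ?_
  field_simp

end mildSolution

/-- Core regularity bound (2.5) for the Gevrey-type criterion, in
Fourier-coefficient form; sums of nonnegative terms are taken in `[0,∞]`. -/
theorem stmt_6 (a : ℝ) (ha : 0 < a) (k : ℕ) (hk : 1 ≤ k)
    (lam : ℕ → ℝ) (hlam : ∀ p, 0 < lam p) (c₀ c₁ : ℕ → ℝ)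
    (f : ℕ → ℝ → ℝ) (hf : ∀ p, ContinuousOn (f p) (Icc 0 a))
    (u u' : ℕ → ℝ → ℝ)
    (hu : ∀ p x, u p x =
      Real.cosh (Real.sqrt (lam p) * x) * c₀ p +
      Real.sinh (Real.sqrt (lam p) * x) / Real.sqrt (lam p) * c₁ p +
      ∫ ξ in (0:ℝ)..x,
        Real.sinh (Real.sqrt (lam p) * (x - ξ)) / Real.sqrt (lam p) * f p ξ)
    (hu' : ∀ p, ∀ x ∈ Icc (0:ℝ) a, HasDerivWithinAt (u p) (u' p x) (Icc 0 a) x) :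
    ∀ x ∈ Icc (0:ℝ) a,
      (∑' p : ℕ, ENNReal.ofReal
          (lam p ^ k * Real.exp (2 * Real.sqrt (lam p) * (a - x)) *
            (u p x + u' p x / Real.sqrt (lam p)) ^ 2)) ≤
        3 * (∑' p : ℕ, ENNReal.ofReal (lam p ^ k * (u p a) ^ 2)) +
        3 * (∑' p : ℕ, ENNReal.ofReal (lam p ^ (k - 1) * (u' p a) ^ 2)) +
        (3 / 2 : ℝ≥0∞) * (∑' p : ℕ, ENNReal.ofReal
          (lam p ^ ((k : ℝ) - 3 / 2) * (Real.exp (2 * Real.sqrt (lam p) * a) - 1) *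
            ∫ ξ in (0:ℝ)..a, (f p ξ) ^ 2)) := by
  intro x hx
  have hu_eq (p : ℕ) : u p = mildSolution √(lam p) (c₀ p) (c₁ p) (f p) := funext (hu p)
  have hmode (p : ℕ) := pow_mul_exp_mul_sq_mildSolution_add_deriv_div_le (hlam p) hk ha (hf p)
    (fun y hy => hu_eq p ▸ hu' p y hy) hx
  simp only [← hu_eq] at hmode
  have h32 : ENNReal.ofReal (3 / 2) = 3 / 2 := by norm_num [ENNReal.ofReal_div_of_pos]
  have hbound := ENNReal.tsum_ofReal_le_of_le (by norm_num) (by norm_num) (by norm_num)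
    (fun p => mul_nonneg (pow_nonneg (hlam p).le _) (sq_nonneg _))
    (fun p => mul_nonneg (pow_nonneg (hlam p).le _) (sq_nonneg _)) (fun p => ?_) hmode
  · simpa only [ENNReal.ofReal_ofNat, h32] using hbound
  · have := one_le_exp (by positivity : 0 ≤ 2 * √(lam p) * a)
    have : 0 ≤ ∫ ξ in 0..a, f p ξ ^ 2 :=
      intervalIntegral.integral_nonneg ha.le fun ξ _ => sq_nonneg _
    have := (hlam p).le
    positivity
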